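/- Let φ₁, φ₂, σ be real numbers with sin(φ₁/2) ≠ 0 and sin(φ₂/2) ≠ 0, and let X₀, R, X : ℝ → ℂ be differentiable functions satisfying X₀' = (cot(φ₁/2) + i)(R − X₀), R' = (cot(φ₂/2) − i)(X₀ − R), and X' = X₀'·e^{−iσ}. Suppose X(t) ≠ X₀(t) for all t, and set r = (R − X₀)/(X − X₀). Then r satisfies the ODE r' = −(cot(φ₁/2) + cot(φ₂/2))·r − (cot(φ₁/2) + i)·(e^{−iσ} − 1)·r². -/

import Mathlib

open Real Complex

theorem hasDerivAt_div_sub_of_linear_flow {X₀ R X : ℝ → ℂ} {a b e : ℂ} {t : ℝ}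
    (hX₀ : HasDerivAt X₀ (a * (R t - X₀ t)) t) (hR : HasDerivAt R (b * (X₀ t - R t)) t)
    (hX : HasDerivAt X (a * (R t - X₀ t) * e) t) (hne : X t ≠ X₀ t) :
    HasDerivAt (fun s => (R s - X₀ s) / (X s - X₀ s))
      (-(a + b) * ((R t - X₀ t) / (X t - X₀ t)) -
        a * (e - 1) * ((R t - X₀ t) / (X t - X₀ t)) ^ 2) t := by
  have hD : X t - X₀ t ≠ 0 := sub_ne_zero.mpr hne
  refine ((hR.fun_sub hX₀).fun_div (hX.fun_sub hX₀) hD).congr_deriv ?_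
  field_simp
  ring

theorem stmt_11_general (φ₁ φ₂ σ : ℝ)
    (X₀ R X : ℝ → ℂ)
    (hX₀ : Differentiable ℝ X₀) (hR : Differentiable ℝ R) (hX : Differentiable ℝ X)
    (hX₀' : ∀ t, deriv X₀ t =
      ((Real.cos (φ₁ / 2) / Real.sin (φ₁ / 2) : ℝ) + Complex.I) * (R t - X₀ t))
    (hR' : ∀ t, deriv R t =
      ((Real.cos (φ₂ / 2) / Real.sin (φ₂ / 2) : ℝ) - Complex.I) * (X₀ t - R t))
    (hX' : ∀ t, deriv X t = deriv X₀ t * Complex.exp (-Complex.I * σ))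
    (hne : ∀ t, X t ≠ X₀ t) :
    ∀ t, deriv (fun s => (R s - X₀ s) / (X s - X₀ s)) t =
      -((Real.cos (φ₁ / 2) / Real.sin (φ₁ / 2) : ℝ) +
          (Real.cos (φ₂ / 2) / Real.sin (φ₂ / 2) : ℝ)) *
          ((R t - X₀ t) / (X t - X₀ t)) -
        ((Real.cos (φ₁ / 2) / Real.sin (φ₁ / 2) : ℝ) + Complex.I) *
          (Complex.exp (-Complex.I * σ) - 1) * ((R t - X₀ t) / (X t - X₀ t)) ^ 2 := by
  intro t
  have hX₀t := (hX₀ t).hasDerivAt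
  have hRt := (hR t).hasDerivAt
  have hXt := (hX t).hasDerivAt
  rw [hX₀' t] at hX₀t
  rw [hR' t] at hRt
  rw [hX' t, hX₀' t] at hXt
  rw [(hasDerivAt_div_sub_of_linear_flow hX₀t hRt hXt (hne t)).deriv]
  -- the `± I` in the two rates cancel in `a + b`
  push_cast
  ring

theorem stmt_11 (φ₁ φ₂ σ : ℝ) (h₁ : Real.sin (φ₁ / 2) ≠ 0) (h₂ : Real.sin (φ₂ / 2) ≠ 0)
    (X₀ R X : ℝ → ℂ)
    (hX₀ : Differentiable ℝ X₀) (hR : Differentiable ℝ R) (hX : Differentiable ℝ X)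
    (hX₀' : ∀ t, deriv X₀ t =
      ((Real.cos (φ₁ / 2) / Real.sin (φ₁ / 2) : ℝ) + Complex.I) * (R t - X₀ t))
    (hR' : ∀ t, deriv R t =
      ((Real.cos (φ₂ / 2) / Real.sin (φ₂ / 2) : ℝ) - Complex.I) * (X₀ t - R t))
    (hX' : ∀ t, deriv X t = deriv X₀ t * Complex.exp (-Complex.I * σ))
    (hne : ∀ t, X t ≠ X₀ t) :
    ∀ t, deriv (fun s => (R s - X₀ s) / (X s - X₀ s)) t =
      -((Real.cos (φ₁ / 2) / Real.sin (φ₁ / 2) : ℝ) +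
          (Real.cos (φ₂ / 2) / Real.sin (φ₂ / 2) : ℝ)) *
          ((R t - X₀ t) / (X t - X₀ t)) -
        ((Real.cos (φ₁ / 2) / Real.sin (φ₁ / 2) : ℝ) + Complex.I) *
          (Complex.exp (-Complex.I * σ) - 1) * ((R t - X₀ t) / (X t - X₀ t)) ^ 2 :=
  stmt_11_general φ₁ φ₂ σ X₀ R X hX₀ hR hX hX₀' hR' hX' hne
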